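/- Let A be a reflexive clone over ℕ, i.e. a clone equipped with maps λ, λ* : A → A satisfying, for all a ∈ A and f : ℕ → A: (λa)[f] = λ(a[x_1, (f 1)⁺, (f 2)⁺, …]); λ*(a[f]) = (λ* a)[x_1, (f 1)⁺, (f 2)⁺, …]; and λ*(λ a) = a. Then λ and λ* preserve finitary elements: if a ∈ A is finitary then λa and λ* a are finitary. Consequently the set F(A) of finitary elements of A, with the restricted substitution, the constants x_i, and the restrictions of λ and λ*, is again a reflexive clone, and it is locally finitary. -/
import Mathlib


/-- A clone over the positive integers ℕ = {1,2,3,…}. -/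
structure CloneN (A : Type*) where
  sub : A → (ℕ+ → A) → A
  x : ℕ+ → A
  sub_assoc : ∀ (a : A) (f g : ℕ+ → A), sub (sub a f) g = sub a (fun i => sub (f i) g)
  sub_x : ∀ a : A, sub a x = a
  x_sub : ∀ (i : ℕ+) (f : ℕ+ → A), sub (x i) f = f i

/-- `a` has rank `n`. -/
def CloneN.HasRank {A : Type*} (C : CloneN A) : ℕ → A → Prop
  | 0, a => C.sub a (fun _ => C.x 1) = a ∧ C.sub a (fun _ => C.x 2) = a
  | n + 1, a => C.sub a (fun i => C.x (min i ⟨n + 1, Nat.succ_pos n⟩)) = a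

/-- An element is finitary if it has some finite rank. -/
def CloneN.Finitary {A : Type*} (C : CloneN A) (a : A) : Prop := ∃ n : ℕ, C.HasRank n a

/-- A clone is locally finitary if every element is finitary. -/
def CloneN.LocallyFinitary {A : Type*} (C : CloneN A) : Prop := ∀ a : A, C.Finitary a

/-- The lifted sequence `(x_1, (f 1)⁺, (f 2)⁺, …)` where `t⁺ = t[x_2,x_3,…]`. -/
def liftSeq {A : Type*} (C : CloneN A) (f : ℕ+ → A) : ℕ+ → A :=
  fun j => if j = 1 then C.x 1 else C.sub (f (j - 1)) (fun k => C.x (k + 1))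


namespace CloneN
variable {A : Type*} (C : CloneN A)

/-- truncation sequence -/
def trunc (m : ℕ+) : ℕ+ → A := fun i => C.x (min i m)

variable {C}

theorem trunc_mono {a : A} {n m : ℕ+} (h : C.sub a (C.trunc n) = a) (hnm : n ≤ m) :
    C.sub a (C.trunc m) = a := by
  conv_lhs => rw [← h]
  rw [C.sub_assoc]
  have : (fun i => C.sub (C.trunc n i) (C.trunc m)) = C.trunc n := by
    funext i
    simp only [trunc, C.x_sub]
    congr 1
    exact min_eq_left (le_trans (min_le_right i n) hnm)
  rw [this, h]

theorem finitary_iff_trunc {a : A} : C.Finitary a ↔ ∃ m : ℕ+, C.sub a (C.trunc m) = a := by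
  constructor
  · rintro ⟨n, hn⟩
    cases n with
    | zero =>
      refine ⟨1, ?_⟩
      have : C.trunc 1 = fun _ => C.x 1 := by
        funext i; simp [trunc, min_eq_right (PNat.one_le i)]
      rw [this]; exact hn.1
    | succ n => exact ⟨⟨n + 1, Nat.succ_pos n⟩, hn⟩
  · rintro ⟨m, hm⟩
    refine ⟨m.natPred + 1, ?_⟩
    show C.sub a (fun i => C.x (min i ⟨m.natPred + 1, _⟩)) = a
    have : (⟨m.natPred + 1, Nat.succ_pos _⟩ : ℕ+) = m := by
      apply PNat.eq; simp [PNat.natPred]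
      exact Nat.succ_pred_eq_of_pos m.pos
    rw [this]; exact hm

theorem sub_trunc_eq {a : A} {n : ℕ+} (h : C.sub a (C.trunc n) = a) (f : ℕ+ → A) :
    C.sub a f = C.sub a (fun i => f (min i n)) := by
  conv_lhs => rw [← h, C.sub_assoc]
  simp only [trunc, C.x_sub]

/-- finitary elements are closed under substitution -/
theorem finitary_sub {a : A} (ha : C.Finitary a) (f : ℕ+ → A)
    (hf : ∀ i, C.Finitary (f i)) : C.Finitary (C.sub a f) := by
  rw [finitary_iff_trunc] at ha ⊢
  obtain ⟨n, hn⟩ := ha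
  have hf' : ∀ i, ∃ m : ℕ+, C.sub (f i) (C.trunc m) = f i := fun i =>
    finitary_iff_trunc.mp (hf i)
  choose g hg using hf'
  refine ⟨n ⊔ (Finset.Icc 1 n).sup g ⊔ 1, ?_⟩
  rw [sub_trunc_eq hn f, C.sub_assoc]
  have : (fun i => C.sub (f (min i n)) (C.trunc (n ⊔ (Finset.Icc 1 n).sup g ⊔ 1)))
      = fun i => f (min i n) := by
    funext i
    apply trunc_mono (hg (min i n))
    refine le_trans ?_ (le_trans le_sup_right le_sup_left)
    exact Finset.le_sup (f := g) (Finset.mem_Icc.mpr ⟨PNat.one_le _, min_le_right i n⟩)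
  rw [this, ← sub_trunc_eq hn f]

theorem finitary_x (i : ℕ+) : C.Finitary (C.x i) := by
  rw [finitary_iff_trunc]
  exact ⟨i, by rw [C.x_sub]; simp [trunc]⟩

theorem liftSeq_trunc (n : ℕ+) : liftSeq C (C.trunc n) = C.trunc (n + 1) := by
  funext j
  by_cases hj : j = 1
  · subst hj
    simp [liftSeq, trunc, min_eq_left (by exact PNat.one_le _ : (1:ℕ+) ≤ n + 1)]
  · simp only [liftSeq, hj, if_false, trunc, C.x_sub]
    congr 1
    have h1 : (1:ℕ+) < j := lt_of_le_of_ne (PNat.one_le j) (Ne.symm hj)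
    apply PNat.eq
    have hmin : ∀ a b : ℕ+, ((min a b : ℕ+) : ℕ) = min (a:ℕ) (b:ℕ) := fun _ _ => rfl
    push_cast [PNat.sub_coe, h1, hmin]
    have h2 : (1:ℕ) < (j:ℕ) := h1
    omega

end CloneN

/-- For a reflexive clone `(A, λ, λ*)`, both `λ` and `λ*` preserve finitary
elements; consequently the finitary elements form a reflexive clone which is
locally finitary. -/
theorem reflexive_clone_finitary_part {A : Type*} (C : CloneN A)
    (lam lamStar : A → A)
    (hlam : ∀ (a : A) (f : ℕ+ → A), C.sub (lam a) f = lam (C.sub a (liftSeq C f)))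
    (hlamStar : ∀ (a : A) (f : ℕ+ → A),
      lamStar (C.sub a f) = C.sub (lamStar a) (liftSeq C f))
    (hretract : ∀ a : A, lamStar (lam a) = a) :
    (∀ a : A, C.Finitary a → C.Finitary (lam a) ∧ C.Finitary (lamStar a)) ∧
    (∃ (C' : CloneN {a : A // C.Finitary a})
       (lam' lamStar' : {a : A // C.Finitary a} → {a : A // C.Finitary a}),
      (∀ i : ℕ+, (C'.x i : A) = C.x i) ∧
      (∀ (a : {a : A // C.Finitary a}) (f : ℕ+ → {a : A // C.Finitary a}),
        ((C'.sub a f : A)) = C.sub (a : A) (fun i => (f i : A))) ∧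
      (∀ a, (lam' a : A) = lam (a : A)) ∧
      (∀ a, (lamStar' a : A) = lamStar (a : A)) ∧
      (∀ (a : {a : A // C.Finitary a}) (f : ℕ+ → {a : A // C.Finitary a}),
        C'.sub (lam' a) f = lam' (C'.sub a (liftSeq C' f))) ∧
      (∀ (a : {a : A // C.Finitary a}) (f : ℕ+ → {a : A // C.Finitary a}),
        lamStar' (C'.sub a f) = C'.sub (lamStar' a) (liftSeq C' f)) ∧
      (∀ a, lamStar' (lam' a) = a) ∧
      C'.LocallyFinitary) := by
  have preserve : ∀ a : A, C.Finitary a → C.Finitary (lam a) ∧ C.Finitary (lamStar a) := by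
    intro a ha
    rw [CloneN.finitary_iff_trunc] at ha
    obtain ⟨m, hm⟩ := ha
    constructor
    · rw [CloneN.finitary_iff_trunc]
      refine ⟨m, ?_⟩
      rw [hlam, CloneN.liftSeq_trunc, CloneN.trunc_mono hm (by exact le_of_lt (PNat.lt_add_right m 1))]
    · rw [CloneN.finitary_iff_trunc]
      refine ⟨m + 1, ?_⟩
      rw [← CloneN.liftSeq_trunc, ← hlamStar, hm]
  refine ⟨preserve, ?_⟩
  set S := {a : A // C.Finitary a}
  set C' : CloneN S :=
    { sub := fun a f => ⟨C.sub a.1 (fun i => (f i).1),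
        CloneN.finitary_sub a.2 _ (fun i => (f i).2)⟩
      x := fun i => ⟨C.x i, CloneN.finitary_x i⟩
      sub_assoc := by intro a f g; apply Subtype.ext; exact C.sub_assoc _ _ _
      sub_x := by intro a; apply Subtype.ext; exact C.sub_x _
      x_sub := by intro i f; apply Subtype.ext; exact C.x_sub _ _ } with hC'
  have hlift : ∀ f : ℕ+ → S,
      (fun i => ((liftSeq C' f i : S) : A)) = liftSeq C (fun i => ((f i : S) : A)) := by
    intro f
    funext j
    by_cases hj : j = 1
    · simp [liftSeq, hj, hC']
    · simp [liftSeq, hj, hC']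
  refine ⟨C', fun a => ⟨lam a.1, (preserve a.1 a.2).1⟩,
    fun a => ⟨lamStar a.1, (preserve a.1 a.2).2⟩,
    fun i => rfl, fun a f => rfl, fun a => rfl, fun a => rfl, ?_, ?_, ?_, ?_⟩
  · intro a f
    apply Subtype.ext
    show C.sub (lam a.1) (fun i => ((f i : S) : A)) = lam (C.sub a.1 _)
    rw [hlam, hlift]
  · intro a f
    apply Subtype.ext
    show lamStar (C.sub a.1 _) = C.sub (lamStar a.1) (fun i => ((liftSeq C' f i : S) : A))
    rw [hlamStar, hlift]
  · intro a
    apply Subtype.ext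
    exact hretract a.1
  · rintro ⟨a, ha⟩
    obtain ⟨n, hn⟩ := ha
    refine ⟨n, ?_⟩
    cases n with
    | zero => exact ⟨Subtype.ext hn.1, Subtype.ext hn.2⟩
    | succ n => exact Subtype.ext hn
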